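/- Let T be a DFS tree of a 2-vertex-connected graph G. If {x, y} is a separation pair of G (i.e., G - x - y is disconnected), then x and y are comparable in T, i.e., one is an ancestor of the other. -/
import Mathlib


open SimpleGraph

variable {V : Type*} [Fintype V] [DecidableEq V]

/-- `G` is `k`-edge-connected. -/
def EdgeConnGE (G : SimpleGraph V) (k : ℕ) : Prop :=
  2 ≤ Fintype.card V ∧ ∀ S : Finset (Sym2 V), S.card < k → (G.deleteEdges ↑S).Connected

/-- A DFS tree of `G`: a rooted spanning tree (given by a parent function) whose
tree edges are edges of `G` and such that every edge of `G` joins two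
ancestor-comparable vertices. -/
structure DFSTree (G : SimpleGraph V) where
  root : V
  parent : V → V
  parent_root : parent root = root
  parent_adj : ∀ v, v ≠ root → G.Adj v (parent v)
  reaches_root : ∀ v, ∃ n, parent^[n] v = root
  dfs_edge : ∀ u v, G.Adj u v → (∃ n, parent^[n] v = u) ∨ (∃ n, parent^[n] u = v)

/-- `a` is an ancestor of `b` in the DFS tree (possibly `a = b`). -/
def DFSTree.Anc {G : SimpleGraph V} (t : DFSTree G) (a b : V) : Prop :=
  ∃ n, t.parent^[n] b = a

/-- `e` is a tree edge of the DFS tree. -/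
def DFSTree.TreeEdge {G : SimpleGraph V} (t : DFSTree G) (e : Sym2 V) : Prop :=
  ∃ v, v ≠ t.root ∧ e = s(v, t.parent v)

/-- A 2-edge-cut: two distinct edges of `G` whose removal disconnects `G`. -/
def Is2EdgeCut (G : SimpleGraph V) (e₁ e₂ : Sym2 V) : Prop :=
  e₁ ∈ G.edgeSet ∧ e₂ ∈ G.edgeSet ∧ e₁ ≠ e₂ ∧ ¬ (G.deleteEdges {e₁, e₂}).Connected


/-- `G` is 2-vertex-connected: at least 3 vertices and removing any single
vertex leaves it connected. -/
def TwoVertexConnected (G : SimpleGraph V) : Prop :=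
  3 ≤ Fintype.card V ∧ ∀ w : V, (G.induce {v : V | v ≠ w}).Connected


section Aux
set_option linter.unusedSectionVars false

namespace DFSTree
variable {V : Type*} [Fintype V] [DecidableEq V] {G : SimpleGraph V} (t : DFSTree G)

lemma anc_refl (v : V) : t.Anc v v := ⟨0, rfl⟩

lemma anc_trans {a b c : V} (h1 : t.Anc a b) (h2 : t.Anc b c) : t.Anc a c := by
  obtain ⟨m, hm⟩ := h1; obtain ⟨n, hn⟩ := h2
  exact ⟨m + n, by rw [Function.iterate_add_apply, hn, hm]⟩

lemma iter_root (n : ℕ) : t.parent^[n] t.root = t.root :=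
  Function.iterate_fixed t.parent_root n

lemma anc_root (v : V) : t.Anc t.root v := t.reaches_root v

lemma eq_root_of_anc {v : V} (h : t.Anc v t.root) : v = t.root := by
  obtain ⟨n, hn⟩ := h; rw [t.iter_root] at hn; exact hn.symm

noncomputable def depth (v : V) : ℕ := Nat.find (t.reaches_root v)

lemma depth_spec (v : V) : t.parent^[t.depth v] v = t.root := Nat.find_spec (t.reaches_root v)

lemma depth_le {v : V} {n : ℕ} (h : t.parent^[n] v = t.root) : t.depth v ≤ n :=
  Nat.find_le h

lemma depth_root : t.depth t.root = 0 :=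
  Nat.le_zero.mp (t.depth_le (by simp))

lemma eq_root_of_depth_eq_zero {v : V} (h : t.depth v = 0) : v = t.root := by
  have := t.depth_spec v; rwa [h] at this

lemma depth_lt {a b : V} (h : t.Anc a b) (hne : a ≠ b) : t.depth a < t.depth b := by
  obtain ⟨n, hn⟩ := h
  have hn0 : n ≠ 0 := by rintro rfl; exact hne hn.symm
  have hd0 : t.depth b ≠ 0 := by
    intro h0
    obtain rfl := t.eq_root_of_depth_eq_zero h0
    rw [t.iter_root] at hn; exact hne hn.symm
  rcases le_or_gt n (t.depth b) with hle | hlt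
  · have : t.parent^[t.depth b - n] a = t.root := by
      rw [← hn, ← Function.iterate_add_apply, Nat.sub_add_cancel hle, t.depth_spec]
    calc t.depth a ≤ t.depth b - n := t.depth_le this
      _ < t.depth b := Nat.sub_lt (Nat.pos_of_ne_zero hd0) (Nat.pos_of_ne_zero hn0)
  · have : a = t.root := by
      rw [← hn, ← Nat.sub_add_cancel hlt.le, Function.iterate_add_apply, t.depth_spec,
        t.iter_root]
    rw [this, t.depth_root]; exact Nat.pos_of_ne_zero hd0

lemma anc_antisymm {a b : V} (h1 : t.Anc a b) (h2 : t.Anc b a) : a = b := by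
  by_contra hne
  exact absurd (t.depth_lt h2 (Ne.symm hne)) (not_lt.mpr (t.depth_lt h1 hne).le)

lemma anc_comparable {a b c : V} (h1 : t.Anc a c) (h2 : t.Anc b c) :
    t.Anc a b ∨ t.Anc b a := by
  obtain ⟨m, hm⟩ := h1; obtain ⟨n, hn⟩ := h2
  rcases le_total m n with h | h
  · right
    exact ⟨n - m, by rw [← hm, ← Function.iterate_add_apply, Nat.sub_add_cancel h, hn]⟩
  · left
    exact ⟨m - n, by rw [← hn, ← Function.iterate_add_apply, Nat.sub_add_cancel h, hm]⟩

lemma anc_parent (v : V) : t.Anc (t.parent v) v := ⟨1, rfl⟩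

lemma anc_parent_of_anc {a v : V} (h : t.Anc a v) (hne : a ≠ v) : t.Anc a (t.parent v) := by
  obtain ⟨n, hn⟩ := h
  cases n with
  | zero => exact absurd hn.symm hne
  | succ n => exact ⟨n, by rw [← Function.iterate_succ_apply, hn]⟩

lemma parent_fix {v : V} (h : t.parent v = v) : v = t.root := by
  obtain ⟨n, hn⟩ := t.reaches_root v
  rwa [Function.iterate_fixed h n] at hn

omit t in
lemma induce_adj {S : Set V} {a b : V} (ha : a ∈ S) (hb : b ∈ S) (h : G.Adj a b) :
    (G.induce S).Adj ⟨a, ha⟩ ⟨b, hb⟩ := by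
  simpa [comap_adj] using h

lemma crossing' {W : Type*} {H : SimpleGraph W} (P : W → Prop) :
    ∀ {a b : W}, H.Walk a b → P a → ¬ P b → ∃ u w, H.Adj u w ∧ P u ∧ ¬ P w := by
  intro a b p
  induction p with
  | nil => intro ha hb; exact absurd ha hb
  | @cons a c b h q ih =>
    intro ha hb
    by_cases hc : P c
    · exact ih hc hb
    · exact ⟨a, c, h, ha, hc⟩

lemma tree_reach (S : Set V) :
    ∀ (n : ℕ) (w v : V), t.parent^[n] w = v → (∀ k, k ≤ n → t.parent^[k] w ∈ S) →
      ∀ (hw : w ∈ S) (hv : v ∈ S), (G.induce S).Reachable ⟨w, hw⟩ ⟨v, hv⟩ := by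
  intro n
  induction n with
  | zero => intro w v h _ hw hv; cases h; rfl
  | succ n ih =>
    intro w v h hall hw hv
    by_cases hwr : w = t.root
    · subst hwr
      rw [t.iter_root] at h; cases h; rfl
    · have hp : t.parent w ∈ S := by simpa using hall 1 (by omega)
      have h1 : (G.induce S).Adj ⟨w, hw⟩ ⟨t.parent w, hp⟩ :=
        DFSTree.induce_adj hw hp (t.parent_adj w hwr)
      have h2 : t.parent^[n] (t.parent w) = v := by
        rw [← Function.iterate_succ_apply, h]
      refine h1.reachable.trans (ih (t.parent w) v h2 ?_ hp hv)
      intro k hk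
      have := hall (k + 1) (by omega)
      rwa [Function.iterate_succ_apply] at this

/-- If `parent v = x`, escape the subtree of `v` to a proper ancestor of `x`. -/
lemma escape_step {x y v : V} (hGx : (G.induce {w : V | w ≠ x}).Connected)
    (hnxy : ¬ t.Anc x y) (hnyx : ¬ t.Anc y x)
    {S : Set V} (hS : ∀ w, w ∈ S ↔ w ≠ x ∧ w ≠ y)
    (hpv : t.parent v = x) (hv : v ∈ S) :
    ∃ (u : V) (hu : u ∈ S), t.depth u < t.depth v ∧
      (G.induce S).Reachable ⟨v, hv⟩ ⟨u, hu⟩ := by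
  obtain ⟨hvx, hvy⟩ := (hS v).mp hv
  have hrx : t.root ≠ x := by
    rintro rfl; exact hnxy (t.anc_root y)
  have hvr : v ≠ t.root := by
    rintro rfl; exact hrx (by rw [← hpv, t.parent_root])
  have haxv : t.Anc x v := hpv ▸ t.anc_parent v
  obtain ⟨p⟩ := hGx.preconnected ⟨v, hvx⟩ ⟨t.root, hrx⟩
  have hProot : ¬ t.Anc v t.root := fun h => hvr (t.eq_root_of_anc h)
  obtain ⟨⟨w, hwx⟩, ⟨u, hux⟩, hadj, hPw, hPu⟩ :=
    crossing' (fun z : {w : V | w ≠ x} => t.Anc v z.val) p (t.anc_refl v) hProot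
  have hadj' : G.Adj w u := hadj
  have hanc_uw : t.Anc u w := by
    rcases t.dfs_edge w u hadj' with h | h
    · exact absurd (t.anc_trans hPw h) hPu
    · exact h
  have huv : t.Anc u v := by
    rcases t.anc_comparable hanc_uw hPw with h | h
    · exact h
    · exact absurd h hPu
  have hune : u ≠ v := by rintro rfl; exact hPu (t.anc_refl _)
  have hanc_ux : t.Anc u x := hpv ▸ t.anc_parent_of_anc huv hune
  have huy : u ≠ y := by rintro rfl; exact hnyx hanc_ux
  have huS : u ∈ S := (hS u).mpr ⟨hux, huy⟩
  have hdux : t.depth u < t.depth x := t.depth_lt hanc_ux hux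
  have hdxv : t.depth x < t.depth v := t.depth_lt haxv (Ne.symm hvx)
  obtain ⟨n, hn⟩ := hPw
  have hall : ∀ k, k ≤ n → t.parent^[k] w ∈ S := by
    intro k hk
    have hanc : t.Anc v (t.parent^[k] w) :=
      ⟨n - k, by rw [← Function.iterate_add_apply, Nat.sub_add_cancel hk, hn]⟩
    refine (hS _).mpr ⟨?_, ?_⟩
    · rintro h; rw [h] at hanc
      exact hvx (t.anc_antisymm haxv hanc).symm
    · rintro h; rw [h] at hanc
      exact hnxy (t.anc_trans haxv hanc)
  have hwS : w ∈ S := by simpa using hall 0 (by omega)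
  have hreach_wv : (G.induce S).Reachable ⟨w, hwS⟩ ⟨v, hv⟩ :=
    t.tree_reach S n w v hn hall hwS hv
  exact ⟨u, huS, lt_trans hdux hdxv,
    (hreach_wv.symm.trans (induce_adj hwS huS hadj').reachable)⟩

lemma reach_root {x y : V}
    (hGx : (G.induce {w : V | w ≠ x}).Connected)
    (hGy : (G.induce {w : V | w ≠ y}).Connected)
    (hnxy : ¬ t.Anc x y) (hnyx : ¬ t.Anc y x)
    {S : Set V} (hS : ∀ w, w ∈ S ↔ w ≠ x ∧ w ≠ y) (hrS : t.root ∈ S) :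
    ∀ (n : ℕ) (v : V) (hv : v ∈ S), t.depth v ≤ n →
      (G.induce S).Reachable ⟨v, hv⟩ ⟨t.root, hrS⟩ := by
  intro n
  induction n with
  | zero =>
    intro v hv hd
    obtain rfl := t.eq_root_of_depth_eq_zero (Nat.le_zero.mp hd)
    rfl
  | succ n ih =>
    intro v hv hd
    by_cases hvr : v = t.root
    · subst hvr; rfl
    by_cases hpx : t.parent v = x
    · obtain ⟨u, huS, hdu, hr⟩ := t.escape_step hGx hnxy hnyx hS hpx hv
      exact hr.trans (ih u huS (by omega))
    by_cases hpy : t.parent v = y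
    · have hS' : ∀ w, w ∈ S ↔ w ≠ y ∧ w ≠ x := fun w => (hS w).trans and_comm
      obtain ⟨u, huS, hdu, hr⟩ := t.escape_step hGy hnyx hnxy hS' hpy hv
      exact hr.trans (ih u huS (by omega))
    · have hpS : t.parent v ∈ S := (hS _).mpr ⟨hpx, hpy⟩
      have hne : t.parent v ≠ v := fun h => hvr (t.parent_fix h)
      have hdp : t.depth (t.parent v) < t.depth v := t.depth_lt (t.anc_parent v) hne
      exact (induce_adj hv hpS (t.parent_adj v hvr)).reachable.trans
        (ih (t.parent v) hpS (by omega))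

end DFSTree
end Aux

/-- If `{x, y}` is a separation pair of a 2-vertex-connected graph `G`
(removing `x` and `y` disconnects `G`), then `x` and `y` are comparable in any
DFS tree of `G`: one is an ancestor of the other. -/
theorem stmt_10 (G : SimpleGraph V) (h2v : TwoVertexConnected G) (t : DFSTree G)
    (x y : V) (hxy : x ≠ y)
    (hsep : ¬ (G.induce {v : V | v ≠ x ∧ v ≠ y}).Connected) :
    t.Anc x y ∨ t.Anc y x := by
  by_contra h
  push_neg at h
  obtain ⟨hnxy, hnyx⟩ := h
  apply hsep
  have hrx : t.root ≠ x := by rintro rfl; exact hnxy (t.anc_root y)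
  have hry : t.root ≠ y := by rintro rfl; exact hnyx (t.anc_root x)
  have hrS : t.root ∈ {v : V | v ≠ x ∧ v ≠ y} := ⟨hrx, hry⟩
  have key := t.reach_root (h2v.2 x) (h2v.2 y) hnxy hnyx
    (S := {v : V | v ≠ x ∧ v ≠ y}) (fun w => Iff.rfl) hrS
  have : Nonempty ↑{v : V | v ≠ x ∧ v ≠ y} := ⟨⟨t.root, hrS⟩⟩
  refine ⟨fun a b => ?_⟩
  obtain ⟨a, ha⟩ := a
  obtain ⟨b, hb⟩ := b
  exact (key (t.depth a) a ha le_rfl).trans (key (t.depth b) b hb le_rfl).symm
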